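/- arXiv:2308.16630 — 2 statements merged into one kernel-verified Lean document; each statement's English description precedes it below -/
import Mathlib

section
/- Let P be a partially ordered set, let n ∈ ℕ, and let a, b : Fin n → P be tuples with a injective such that b i ≠ a j for all i, j, and such that for every i: b i ≤ a i and every x ∈ P with x ≤ a i and x ≠ a i satisfies x ≤ b i. Then the mapping f determined by (a, b) is an interior mapping, i.e. f is monotone, f(x) ≤ x for all x ∈ P, and f(f(x)) = f(x) for all x ∈ P. -/
/-- If `P` is a poset, `a b : Fin n → P` with `a` injective,
`b i ≠ a j` for all `i j`, and each `b i` is covered by `a i` in the strong sense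
(`b i ≤ a i` and every `x ≤ a i` with `x ≠ a i` satisfies `x ≤ b i`), then the
mapping determined by `(a, b)` is an interior mapping. -/
theorem stmt_1 {P : Type*} [PartialOrder P] (n : ℕ)
    (a b : Fin n → P) (ha : Function.Injective a)
    (hdisj : ∀ i j, b i ≠ a j)
    (hle : ∀ i, b i ≤ a i)
    (hcov : ∀ i, ∀ x : P, x ≤ a i → x ≠ a i → x ≤ b i)
    (f : P → P)
    (hfa : ∀ i, f (a i) = b i)
    (hfx : ∀ x : P, (∀ i, x ≠ a i) → f x = x) :
    Monotone f ∧ (∀ x : P, f x ≤ x) ∧ (∀ x : P, f (f x) = f x) := by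

  have hcontract : ∀ x : P, f x ≤ x := by
    intro x
    by_cases h : ∃ i, x = a i
    · obtain ⟨i, rfl⟩ := h
      rw [hfa]; exact hle i
    · have h' := hfx x (fun i hi => h ⟨i, hi⟩)
      rw [h']
  refine ⟨?_, hcontract, ?_⟩
  · intro x y hxy
    by_cases hy : ∃ j, y = a j
    · obtain ⟨j, rfl⟩ := hy
      rw [hfa]
      by_cases hxa : x = a j
      · subst hxa; rw [hfa]
      · calc f x ≤ x := hcontract x
          _ ≤ b j := hcov j x hxy hxa
    · rw [hfx y (fun j hj => hy ⟨j, hj⟩)]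
      exact le_trans (hcontract x) hxy
  · intro x
    by_cases h : ∃ i, x = a i
    · obtain ⟨i, rfl⟩ := h
      rw [hfa, hfx (b i) (fun j => hdisj i j)]
    · have h' := hfx x (fun i hi => h ⟨i, hi⟩)
      rw [h']; exact h'
end

section
/- Let P be a partially ordered set, let n ∈ ℕ, and let a, b : Fin n → P be tuples with a injective such that b i ≠ a j for all i, j, and such that for every i: a i ≤ b i and every x ∈ P with a i ≤ x and x ≠ a i satisfies b i ≤ x. Then the mapping f determined by (a, b) is a closure mapping, i.e. f is monotone, x ≤ f(x) for all x ∈ P, and f(f(x)) = f(x) for all x ∈ P. -/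
/-- If `P` is a poset, `a b : Fin n → P` with `a` injective,
`b i ≠ a j` for all `i j`, and each `a i` is covered by `b i` in the strong sense
(`a i ≤ b i` and every `x ≥ a i` with `x ≠ a i` satisfies `b i ≤ x`), then the
mapping determined by `(a, b)` is a closure mapping. -/
theorem stmt_3 {P : Type*} [PartialOrder P] (n : ℕ)
    (a b : Fin n → P) (ha : Function.Injective a)
    (hdisj : ∀ i j, b i ≠ a j)
    (hle : ∀ i, a i ≤ b i)
    (hcov : ∀ i, ∀ x : P, a i ≤ x → x ≠ a i → b i ≤ x)
    (f : P → P)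
    (hfa : ∀ i, f (a i) = b i)
    (hfx : ∀ x : P, (∀ i, x ≠ a i) → f x = x) :
    Monotone f ∧ (∀ x : P, x ≤ f x) ∧ (∀ x : P, f (f x) = f x) := by
  have hincr : ∀ x : P, x ≤ f x := by
    intro x
    by_cases hx : ∃ i, x = a i
    · obtain ⟨i, rfl⟩ := hx
      rw [hfa]; exact hle i
    · rw [hfx x (fun i hi => hx ⟨i, hi⟩)]
  refine ⟨?_, hincr, ?_⟩
  · intro x y hxy
    by_cases hx : ∃ i, x = a i
    · obtain ⟨i, rfl⟩ := hx
      rw [hfa]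
      by_cases hy : ∃ j, y = a j
      · obtain ⟨j, rfl⟩ := hy
        rw [hfa]
        rcases eq_or_ne i j with rfl | hij
        · exact le_rfl
        · exact le_trans (hcov i (a j) hxy (fun h => hij (ha h.symm))) (hle j)
      · rw [hfx y (fun j hj => hy ⟨j, hj⟩)]
        rcases eq_or_ne y (a i) with rfl | hne
        · exact absurd ⟨i, rfl⟩ hy
        · exact hcov i y hxy hne
    · rw [hfx x (fun i hi => hx ⟨i, hi⟩)]
      exact le_trans hxy (hincr y)
  · intro x
    by_cases hx : ∃ i, x = a i
    · obtain ⟨i, rfl⟩ := hx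
      rw [hfa, hfx (b i) (fun j => hdisj i j)]
    · rw [hfx x (fun i hi => hx ⟨i, hi⟩), hfx x (fun i hi => hx ⟨i, hi⟩)]
end
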